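/- arXiv:1005.0768 — 3 statements merged into one kernel-verified Lean document; each statement's English description precedes it below -/
import Mathlib

section
/- Measurability of the pricing map: under the seniority structure condition (with the functions ψⁱⱼ not depending on a), the map Ψ that assigns to each exogenous asset vector a ∈ ℝ^n with a ≥ 0 the unique solution (r¹(a),…,r^m(a),s(a)) ∈ ℝ^{n(m+1)} of the liquidation value system is Borel- (hence Lebesgue-) measurable. -/
/-!
The solution `Ψ a` is a fixed point of the right-hand side `Φₐ` of the system. At each node the
seniority waterfall is monotone in the cross-holding value `y` and its outputs add up to `aₖ + y`
(for `m > 0`), so the ℓ¹ variation of the outputs is at most `|Δy|`. Since the column sums of the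
ownership matrices are bounded by some `κ < 1`, `Φₐ` is a `κ`-contraction for the ℓ¹ distance,
uniformly in `a`. Hence `Ψ a = lim_N Φₐ^[N] 0`, and each `a ↦ Φₐ^[N] 0` is Borel because
monotone functions are.
-/

open Matrix Finset Filter

noncomputable section

/-- Componentwise minimum of two vectors in ℝ^n. -/
def vmin {n : ℕ} (x y : Fin n → ℝ) : Fin n → ℝ := fun k => min (x k) (y k)

/-- Componentwise positive part of a vector in ℝ^n. -/
def vpos {n : ℕ} (x : Fin n → ℝ) : Fin n → ℝ := fun k => max (x k) 0

/-- ℓ¹-norm of a vector in ℝ^n. -/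
def l1 {n : ℕ} (x : Fin n → ℝ) : ℝ := ∑ k, |x k|

/-- An n×n matrix is strictly left substochastic if all entries are nonnegative
and every column sum is < 1. -/
def StrictlyLeftSubstochastic {n : ℕ} (M : Matrix (Fin n) (Fin n) ℝ) : Prop :=
  (∀ i j, 0 ≤ M i j) ∧ ∀ j, ∑ i, M i j < 1

/-- The liquidation value system: `r j` for `j = 0` is the highest-priority recovery claim,
`s` is equity. -/
def LiqSystem {n m : ℕ} (a : Fin n → ℝ) (Ms : Matrix (Fin n) (Fin n) ℝ)
    (Md : Fin m → Matrix (Fin n) (Fin n) ℝ)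
    (d : Fin m → (Fin m → Fin n → ℝ) → (Fin n → ℝ) → (Fin n → ℝ))
    (r : Fin m → Fin n → ℝ) (s : Fin n → ℝ) : Prop :=
  (∀ j : Fin m, (j : ℕ) = 0 →
    r j = vmin (d j r s) (a + Ms.mulVec s + ∑ i, (Md i).mulVec (r i))) ∧
  (∀ j : Fin m, (j : ℕ) ≠ 0 →
    r j = vmin (d j r s)
      (vpos (a + Ms.mulVec s + ∑ i, (Md i).mulVec (r i) - ∑ i ∈ Finset.Iio j, d i r s))) ∧
  s = vpos (a + Ms.mulVec s + ∑ i, (Md i).mulVec (r i) - ∑ i, d i r s)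

/-- I^max : the maximum column sum over all ownership matrices. -/
def Imax {n m : ℕ} (Ms : Matrix (Fin n) (Fin n) ℝ)
    (Md : Fin m → Matrix (Fin n) (Fin n) ℝ) : ℝ :=
  max (⨆ j, ∑ i, Ms i j) (⨆ l, ⨆ j, ∑ i, (Md l) i j)

open Function Topology

lemma exists_nonneg_lt_one_forall_le {ι : Type*} [Fintype ι] (f : ι → ℝ) (hf : ∀ i, f i < 1) :
    ∃ κ : ℝ, 0 ≤ κ ∧ κ < 1 ∧ ∀ i, f i ≤ κ := by
  refine ⟨(univ.sup fun i => (f i).toNNReal : NNReal), NNReal.coe_nonneg _, ?_, fun i => ?_⟩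
  · exact NNReal.coe_lt_one.2 ((Finset.sup_lt_iff zero_lt_one).2 fun i _ =>
      Real.toNNReal_lt_one.2 (hf i))
  · exact (Real.le_coe_toNNReal (f i)).trans
      (NNReal.coe_le_coe.2 (le_sup (f := fun i => (f i).toNNReal) (mem_univ i)))

lemma tendsto_iterate_of_contracting_gauge {X : Type*} [PseudoMetricSpace X] (D : X → X → ℝ)
    (hD : ∀ x y, dist x y ≤ D x y) {F : X → X} {κ : ℝ} (hκ₀ : 0 ≤ κ) (hκ₁ : κ < 1)
    (hF : ∀ x y, D (F x) (F y) ≤ κ * D x y) {p : X} (hp : IsFixedPt F p) (x : X) :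
    Tendsto (fun N => F^[N] x) atTop (𝓝 p) := by
  have hbound : ∀ N, D (F^[N] x) p ≤ κ ^ N * D x p := by
    intro N
    induction N with
    | zero => simp
    | succ N ih => calc
        D (F^[N + 1] x) p = D (F (F^[N] x)) (F p) := by rw [iterate_succ_apply', hp.eq]
        _ ≤ κ * D (F^[N] x) p := hF _ _
        _ ≤ κ * (κ ^ N * D x p) := mul_le_mul_of_nonneg_left ih hκ₀
        _ = κ ^ (N + 1) * D x p := by ring
  rw [tendsto_iff_dist_tendsto_zero]
  refine squeeze_zero (fun _ => dist_nonneg) (fun N => (hD _ _).trans (hbound N)) ?_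
  simpa using (tendsto_pow_atTop_nhds_zero_of_lt_one hκ₀ hκ₁).mul_const (D x p)

lemma measurable_iterate_apply {α X : Type*} [MeasurableSpace α] [MeasurableSpace X]
    {F : α → X → X} (hF : Measurable (uncurry F)) (x : X) (N : ℕ) :
    Measurable fun a => (F a)^[N] x := by
  induction N with
  | zero => exact measurable_const
  | succ N ih =>
    simp only [iterate_succ_apply']
    exact hF.comp (measurable_id.prodMk ih)

section L1

variable {n : ℕ}

lemma l1_nonneg (x : Fin n → ℝ) : 0 ≤ l1 x := sum_nonneg fun _ _ => abs_nonneg _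

lemma dist_le_l1_sub (x y : Fin n → ℝ) : dist x y ≤ l1 (x - y) :=
  (dist_pi_le_iff (l1_nonneg _)).2 fun k => by
    simpa [Real.dist_eq, l1] using single_le_sum (f := fun k => |x k - y k|)
      (fun _ _ => abs_nonneg _) (mem_univ k)

lemma l1_add_le (x y : Fin n → ℝ) : l1 (x + y) ≤ l1 x + l1 y := by
  rw [l1, l1, l1, ← sum_add_distrib]
  exact sum_le_sum fun k _ => abs_add_le (x k) (y k)

lemma l1_sum_le {ι : Type*} (s : Finset ι) (x : ι → Fin n → ℝ) :
    l1 (∑ i ∈ s, x i) ≤ ∑ i ∈ s, l1 (x i) := by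
  simp only [l1, Finset.sum_apply]
  rw [sum_comm]
  exact sum_le_sum fun k _ => abs_sum_le_sum_abs _ _

lemma l1_mulVec_le {M : Matrix (Fin n) (Fin n) ℝ} (hM : ∀ i j, 0 ≤ M i j) {κ : ℝ}
    (hκ : ∀ j, ∑ i, M i j ≤ κ) (x : Fin n → ℝ) : l1 (M *ᵥ x) ≤ κ * l1 x := calc
  l1 (M *ᵥ x) ≤ ∑ i, ∑ j, M i j * |x j| := sum_le_sum fun i _ => by
      simp only [mulVec, dotProduct]
      refine (abs_sum_le_sum_abs (fun j => M i j * x j) _).trans_eq (sum_congr rfl fun j _ => ?_)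
      rw [abs_mul, abs_of_nonneg (hM i j)]
  _ = ∑ j, (∑ i, M i j) * |x j| := by rw [sum_comm]; simp only [sum_mul]
  _ ≤ ∑ j, κ * |x j| := sum_le_sum fun j _ => mul_le_mul_of_nonneg_right (hκ j) (abs_nonneg _)
  _ = κ * l1 x := (mul_sum _ _ _).symm

end L1

namespace Waterfall

variable (ψ : ℕ → ℝ → ℝ) (c : ℝ)

/-- What is left of the assets `c + y` once the claims `ψ 0 y, …, ψ (k - 1) y` are served.
The most senior claim is served from `c + y` itself, without taking a positive part. -/
def residual (k : ℕ) (y : ℝ) : ℝ :=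
  if k = 0 then c + y else max (c + y - ∑ l ∈ range k, ψ l y) 0

def tranche (i : ℕ) (y : ℝ) : ℝ := min (ψ i y) (residual ψ c i y)

def equity (m : ℕ) (y : ℝ) : ℝ := max (c + y - ∑ l ∈ range m, ψ l y) 0

variable {ψ}

lemma tranche_eq_residual_sub (hψ : ∀ l y, 0 ≤ ψ l y) (i : ℕ) (y : ℝ) :
    tranche ψ c i y = residual ψ c i y - residual ψ c (i + 1) y := by
  have h := hψ i y
  rcases i with _ | i
  · simp only [tranche, residual, if_pos, zero_add, sum_range_one, one_ne_zero,
      if_false, min_def, max_def]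
    split_ifs <;> linarith
  · simp only [tranche, residual, Nat.succ_ne_zero, if_false, sum_range_succ _ (i + 1), min_def,
      max_def]
    split_ifs <;> linarith

lemma sum_tranche_add_equity (hψ : ∀ l y, 0 ≤ ψ l y) {m : ℕ} (hm : m ≠ 0) (y : ℝ) :
    ∑ i ∈ range m, tranche ψ c i y + equity ψ c m y = c + y := by
  have hequity : equity ψ c m y = residual ψ c m y := by simp [equity, residual, hm]
  rw [sum_congr rfl fun i _ => tranche_eq_residual_sub c hψ i y, sum_range_sub', hequity, residual,
    if_pos rfl]
  ring

lemma monotone_sub_sum {m : ℕ} (hmono : ∀ l, Monotone (ψ l))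
    (hlip : ∀ y₁ y₂, y₂ ≤ y₁ → ∑ l ∈ range m, (ψ l y₁ - ψ l y₂) ≤ y₁ - y₂) {k : ℕ}
    (hk : k ≤ m) :
    Monotone fun y => c + y - ∑ l ∈ range k, ψ l y := by
  intro y₂ y₁ h
  have hsub : ∑ l ∈ range k, (ψ l y₁ - ψ l y₂) ≤ ∑ l ∈ range m, (ψ l y₁ - ψ l y₂) :=
    sum_le_sum_of_subset_of_nonneg (range_subset_range.2 hk)
      fun l _ _ => sub_nonneg.2 (hmono l h)
  have := hlip y₁ y₂ h
  simp only [sum_sub_distrib] at hsub this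
  linarith

lemma monotone_tranche {m : ℕ} (hmono : ∀ l, Monotone (ψ l))
    (hlip : ∀ y₁ y₂, y₂ ≤ y₁ → ∑ l ∈ range m, (ψ l y₁ - ψ l y₂) ≤ y₁ - y₂) {i : ℕ}
    (hi : i < m) : Monotone (tranche ψ c i) := by
  refine (hmono i).min ?_
  unfold residual
  by_cases h0 : i = 0
  · simpa [h0] using monotone_const.add monotone_id
  · simpa [h0] using (monotone_sub_sum c hmono hlip hi.le).max monotone_const

lemma monotone_equity {m : ℕ} (hmono : ∀ l, Monotone (ψ l))
    (hlip : ∀ y₁ y₂, y₂ ≤ y₁ → ∑ l ∈ range m, (ψ l y₁ - ψ l y₂) ≤ y₁ - y₂) :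
    Monotone (equity ψ c m) :=
  (monotone_sub_sum c hmono hlip le_rfl).max monotone_const

lemma sum_abs_tranche_sub_add_abs_equity_sub_le {m : ℕ} (hψ : ∀ l y, 0 ≤ ψ l y)
    (hmono : ∀ l, Monotone (ψ l))
    (hlip : ∀ y₁ y₂, y₂ ≤ y₁ → ∑ l ∈ range m, (ψ l y₁ - ψ l y₂) ≤ y₁ - y₂) (y₁ y₂ : ℝ) :
    ∑ i ∈ range m, |tranche ψ c i y₁ - tranche ψ c i y₂| + |equity ψ c m y₁ - equity ψ c m y₂|
      ≤ |y₁ - y₂| := by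
  wlog h : y₂ ≤ y₁ generalizing y₁ y₂
  · simpa only [abs_sub_comm] using this y₂ y₁ (le_of_not_ge h)
  rcases eq_or_ne m 0 with rfl | hm
  · simpa [equity] using abs_max_sub_max_le_abs (c + y₁) (c + y₂) 0
  have htranche : ∀ i ∈ range m, |tranche ψ c i y₁ - tranche ψ c i y₂|
      = tranche ψ c i y₁ - tranche ψ c i y₂ := fun i hi =>
    abs_of_nonneg (sub_nonneg.2 (monotone_tranche c hmono hlip (mem_range.1 hi) h))
  rw [sum_congr rfl htranche, abs_of_nonneg (sub_nonneg.2 (monotone_equity c hmono hlip h)),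
    abs_of_nonneg (sub_nonneg.2 h), sum_sub_distrib]
  linarith [sum_tranche_add_equity c hψ hm y₁, sum_tranche_add_equity c hψ hm y₂]

end Waterfall

namespace Liquidation

variable {n m : ℕ}

def crossHoldings (Ms : Matrix (Fin n) (Fin n) ℝ) (Md : Fin m → Matrix (Fin n) (Fin n) ℝ)
    (x : (Fin m → Fin n → ℝ) × (Fin n → ℝ)) : Fin n → ℝ :=
  Ms *ᵥ x.2 + ∑ l, Md l *ᵥ x.1 l

def claimsAt (psi : Fin m → Fin n → ℝ → ℝ) (k : Fin n) (l : ℕ) (y : ℝ) : ℝ :=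
  if h : l < m then psi ⟨l, h⟩ k y else 0

/-- The right-hand side of the liquidation value system, with `dⁱ` expressed through `ψⁱ`. -/
def liquidationMap (Ms : Matrix (Fin n) (Fin n) ℝ) (Md : Fin m → Matrix (Fin n) (Fin n) ℝ)
    (psi : Fin m → Fin n → ℝ → ℝ) (a : Fin n → ℝ) (x : (Fin m → Fin n → ℝ) × (Fin n → ℝ)) :
    (Fin m → Fin n → ℝ) × (Fin n → ℝ) :=
  (fun i k => Waterfall.tranche (claimsAt psi k) (a k) i (crossHoldings Ms Md x k),
    fun k => Waterfall.equity (claimsAt psi k) (a k) m (crossHoldings Ms Md x k))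

def l1Dist (x y : (Fin m → Fin n → ℝ) × (Fin n → ℝ)) : ℝ :=
  ∑ l, l1 (x.1 l - y.1 l) + l1 (x.2 - y.2)

lemma dist_le_l1Dist (x y : (Fin m → Fin n → ℝ) × (Fin n → ℝ)) : dist x y ≤ l1Dist x y := by
  have h₁ : dist x.1 y.1 ≤ ∑ l, l1 (x.1 l - y.1 l) :=
    (dist_pi_le_iff (sum_nonneg fun l _ => l1_nonneg _)).2 fun l =>
      (dist_le_l1_sub _ _).trans
        (single_le_sum (f := fun l => l1 (x.1 l - y.1 l)) (fun l _ => l1_nonneg _) (mem_univ l))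
  rw [Prod.dist_eq, l1Dist]
  exact max_le (h₁.trans (le_add_of_nonneg_right (l1_nonneg _)))
    ((dist_le_l1_sub _ _).trans (le_add_of_nonneg_left (dist_nonneg.trans h₁)))

section claimsAt

variable (psi : Fin m → Fin n → ℝ → ℝ) (k : Fin n)

lemma claimsAt_val (i : Fin m) (y : ℝ) : claimsAt psi k i y = psi i k y := by
  simp [claimsAt]

lemma sum_range_claimsAt_eq_sum_Iio (i : Fin m) (y : ℝ) :
    ∑ l ∈ range i, claimsAt psi k l y = ∑ l ∈ Iio i, psi l k y := by
  rw [← Nat.Iio_eq_range, ← Fin.map_valEmbedding_Iio, sum_map]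
  simp only [Fin.valEmbedding_apply, claimsAt_val]

lemma sum_range_claimsAt (y : ℝ) : ∑ l ∈ range m, claimsAt psi k l y = ∑ i, psi i k y := by
  rw [← Fin.sum_univ_eq_sum_range]
  simp only [claimsAt_val]

lemma claimsAt_nonneg (hpsi : ∀ i j y, 0 ≤ psi i j y) (l : ℕ) (y : ℝ) :
    0 ≤ claimsAt psi k l y := by
  unfold claimsAt
  split_ifs
  exacts [hpsi _ _ _, le_rfl]

lemma monotone_claimsAt (hpsi : ∀ i j, Monotone (psi i j)) (l : ℕ) :
    Monotone (claimsAt psi k l) := by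
  unfold claimsAt
  by_cases h : l < m
  · simpa only [dif_pos h] using hpsi ⟨l, h⟩ k
  · simpa only [dif_neg h] using monotone_const

lemma sum_claimsAt_sub_le
    (hpsi : ∀ j (y₁ y₂ : ℝ), y₂ ≤ y₁ → ∑ i, (psi i j y₁ - psi i j y₂) ≤ y₁ - y₂)
    (y₁ y₂ : ℝ) (h : y₂ ≤ y₁) :
    ∑ l ∈ range m, (claimsAt psi k l y₁ - claimsAt psi k l y₂) ≤ y₁ - y₂ := by
  simpa only [sum_sub_distrib, sum_range_claimsAt] using hpsi k y₁ y₂ h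

lemma measurable_claimsAt (hpsi : ∀ i j, Measurable (psi i j)) (l : ℕ) :
    Measurable (claimsAt psi k l) := by
  unfold claimsAt
  by_cases h : l < m
  · simpa only [dif_pos h] using hpsi ⟨l, h⟩ k
  · simpa only [dif_neg h] using measurable_const

end claimsAt

variable {Ms : Matrix (Fin n) (Fin n) ℝ} {Md : Fin m → Matrix (Fin n) (Fin n) ℝ}
  {psi : Fin m → Fin n → ℝ → ℝ}

lemma l1Dist_liquidationMap_le (hpsi_nonneg : ∀ i j y, 0 ≤ psi i j y)
    (hpsi_mono : ∀ i j, Monotone (psi i j))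
    (hpsi_lip : ∀ j (y₁ y₂ : ℝ), y₂ ≤ y₁ → ∑ i, (psi i j y₁ - psi i j y₂) ≤ y₁ - y₂)
    (a : Fin n → ℝ) (x x' : (Fin m → Fin n → ℝ) × (Fin n → ℝ)) :
    l1Dist (liquidationMap Ms Md psi a x) (liquidationMap Ms Md psi a x')
      ≤ l1 (crossHoldings Ms Md x - crossHoldings Ms Md x') := by
  simp only [l1Dist, l1, liquidationMap, Pi.sub_apply]
  rw [sum_comm, ← sum_add_distrib]
  refine sum_le_sum fun k _ => ?_
  rw [Fin.sum_univ_eq_sum_range (fun i => |Waterfall.tranche (claimsAt psi k) (a k) i _ -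
    Waterfall.tranche (claimsAt psi k) (a k) i _|)]
  exact Waterfall.sum_abs_tranche_sub_add_abs_equity_sub_le _ (claimsAt_nonneg psi k hpsi_nonneg)
    (monotone_claimsAt psi k hpsi_mono) (sum_claimsAt_sub_le psi k hpsi_lip) _ _

lemma l1_crossHoldings_sub_le (hMs : ∀ i j, 0 ≤ Ms i j) (hMd : ∀ l i j, 0 ≤ Md l i j) {κ : ℝ}
    (hκs : ∀ j, ∑ i, Ms i j ≤ κ) (hκd : ∀ l j, ∑ i, Md l i j ≤ κ)
    (x x' : (Fin m → Fin n → ℝ) × (Fin n → ℝ)) :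
    l1 (crossHoldings Ms Md x - crossHoldings Ms Md x') ≤ κ * l1Dist x x' := by
  have hsplit : crossHoldings Ms Md x - crossHoldings Ms Md x'
      = Ms *ᵥ (x.2 - x'.2) + ∑ l, Md l *ᵥ (x.1 l - x'.1 l) := by
    simp only [crossHoldings, mulVec_sub, sum_sub_distrib]
    abel
  calc l1 (crossHoldings Ms Md x - crossHoldings Ms Md x')
      ≤ l1 (Ms *ᵥ (x.2 - x'.2)) + ∑ l, l1 (Md l *ᵥ (x.1 l - x'.1 l)) := by
        rw [hsplit]
        exact (l1_add_le _ _).trans (add_le_add le_rfl (l1_sum_le _ _))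
    _ ≤ κ * l1 (x.2 - x'.2) + ∑ l, κ * l1 (x.1 l - x'.1 l) :=
        add_le_add (l1_mulVec_le hMs hκs _) (sum_le_sum fun l _ => l1_mulVec_le (hMd l) (hκd l) _)
    _ = κ * l1Dist x x' := by rw [l1Dist, ← mul_sum]; ring

lemma isFixedPt_liquidationMap {d : Fin m → (Fin m → Fin n → ℝ) → (Fin n → ℝ) → (Fin n → ℝ)}
    (hd_eq : ∀ i r s j, d i r s j = psi i j (Ms.mulVec s j + ∑ l, (Md l).mulVec (r l) j))
    {a : Fin n → ℝ} {r : Fin m → Fin n → ℝ} {s : Fin n → ℝ} (h : LiqSystem a Ms Md d r s) :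
    IsFixedPt (liquidationMap Ms Md psi a) (r, s) := by
  obtain ⟨hsenior, hjunior, hequity⟩ := h
  have hassets : ∀ k, (a + Ms *ᵥ s + ∑ l, Md l *ᵥ r l) k = a k + crossHoldings Ms Md (r, s) k :=
    fun k => by simp [crossHoldings, add_assoc]
  have hd : ∀ i k, d i r s k = psi i k (crossHoldings Ms Md (r, s) k) := fun i k => by
    simp [hd_eq, crossHoldings]
  refine Prod.ext (funext fun i => funext fun k => ?_) (funext fun k => ?_)
  · simp only [liquidationMap, Waterfall.tranche, Waterfall.residual, claimsAt_val,
      sum_range_claimsAt_eq_sum_Iio]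
    by_cases hi : (i : ℕ) = 0
    · simp [hsenior i hi, vmin, hi, hassets, hd, -Fin.val_eq_zero_iff]
    · simp [hjunior i hi, vmin, vpos, hi, hassets, hd]
  · conv_rhs => rw [hequity]
    simp [liquidationMap, Waterfall.equity, sum_range_claimsAt, vpos, hassets, hd]

lemma measurable_liquidationMap (hpsi : ∀ i j, Measurable (psi i j)) :
    Measurable (uncurry (liquidationMap Ms Md psi)) := by
  have hy : ∀ k, Measurable fun p : (Fin n → ℝ) × ((Fin m → Fin n → ℝ) × (Fin n → ℝ)) =>
      crossHoldings Ms Md p.2 k := fun k => by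
    unfold crossHoldings
    fun_prop
  have hc : ∀ k l, Measurable (claimsAt psi k l) := fun k => measurable_claimsAt psi k hpsi
  refine (measurable_pi_lambda _ fun i => measurable_pi_lambda _ fun k => ?_).prodMk
    (measurable_pi_lambda _ fun k => ?_)
  · simp only [Waterfall.tranche, Waterfall.residual]
    split_ifs <;> fun_prop
  · simp only [Waterfall.equity]
    fun_prop

end Liquidation

open Liquidation in
theorem pricing_map_measurable_general {n m : ℕ}
    (Ms : Matrix (Fin n) (Fin n) ℝ) (hMs : StrictlyLeftSubstochastic Ms)
    (Md : Fin m → Matrix (Fin n) (Fin n) ℝ) (hMd : ∀ i, StrictlyLeftSubstochastic (Md i))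
    (d : Fin m → (Fin m → Fin n → ℝ) → (Fin n → ℝ) → (Fin n → ℝ))
    (psi : Fin m → Fin n → ℝ → ℝ)
    (hpsi_nonneg : ∀ i j y, 0 ≤ psi i j y)
    (hpsi_mono : ∀ i j, Monotone (psi i j))
    (hd_eq : ∀ i r s j, d i r s j = psi i j (Ms.mulVec s j + ∑ l, (Md l).mulVec (r l) j))
    (hpsi_lip : ∀ j (y1 y2 : ℝ), y2 ≤ y1 → ∑ i, (psi i j y1 - psi i j y2) ≤ y1 - y2)
    (Psi : (Fin n → ℝ) → (Fin m → Fin n → ℝ) × (Fin n → ℝ))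
    (hPsi : ∀ a : Fin n → ℝ, (∀ k, 0 ≤ a k) → LiqSystem a Ms Md d (Psi a).1 (Psi a).2) :
    Measurable ({a : Fin n → ℝ | ∀ k, 0 ≤ a k}.restrict Psi) := by
  obtain ⟨κ, hκ₀, hκ₁, hκ⟩ := exists_nonneg_lt_one_forall_le
    (Sum.elim (fun j => ∑ i, Ms i j) fun lj : Fin m × Fin n => ∑ i, Md lj.1 i lj.2)
    (by rintro (j | ⟨l, j⟩); exacts [hMs.2 j, (hMd l).2 j])
  have hcontract : ∀ a x x', l1Dist (liquidationMap Ms Md psi a x)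
      (liquidationMap Ms Md psi a x') ≤ κ * l1Dist x x' := fun a x x' =>
    (l1Dist_liquidationMap_le hpsi_nonneg hpsi_mono hpsi_lip a x x').trans
      (l1_crossHoldings_sub_le hMs.1 (fun l => (hMd l).1) (fun j => hκ (.inl j))
        (fun l j => hκ (.inr (l, j))) x x')
  have hiterates : ∀ N, Measurable fun a => (liquidationMap Ms Md psi a)^[N] 0 :=
    measurable_iterate_apply (measurable_liquidationMap fun i j => (hpsi_mono i j).measurable) 0
  refine measurable_of_tendsto_metrizable (fun N => (hiterates N).comp measurable_subtype_coe)
    (tendsto_pi_nhds.2 fun a => ?_)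
  exact tendsto_iterate_of_contracting_gauge l1Dist dist_le_l1Dist hκ₀ hκ₁ (hcontract a)
    (isFixedPt_liquidationMap hd_eq (hPsi a a.2)) 0

/-- Measurability of the pricing map: any map Ψ assigning to each nonnegative exogenous
asset vector a the (unique) solution of the liquidation value system is
Borel-measurable (on the nonnegative orthant). -/
theorem pricing_map_measurable {n m : ℕ} (hn : 0 < n) (hm : 0 < m)
    (Ms : Matrix (Fin n) (Fin n) ℝ) (hMs : StrictlyLeftSubstochastic Ms)
    (Md : Fin m → Matrix (Fin n) (Fin n) ℝ) (hMd : ∀ i, StrictlyLeftSubstochastic (Md i))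
    (d : Fin m → (Fin m → Fin n → ℝ) → (Fin n → ℝ) → (Fin n → ℝ))
    (hd : ∀ i r s k, 0 ≤ d i r s k)
    (psi : Fin m → Fin n → ℝ → ℝ)
    (hpsi_nonneg : ∀ i j y, 0 ≤ psi i j y)
    (hpsi_mono : ∀ i j, Monotone (psi i j))
    (hd_eq : ∀ i r s j, d i r s j = psi i j (Ms.mulVec s j + ∑ l, (Md l).mulVec (r l) j))
    (hpsi_lip : ∀ j (y1 y2 : ℝ), y2 ≤ y1 → ∑ i, (psi i j y1 - psi i j y2) ≤ y1 - y2)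
    (Psi : (Fin n → ℝ) → (Fin m → Fin n → ℝ) × (Fin n → ℝ))
    (hPsi : ∀ a : Fin n → ℝ, (∀ k, 0 ≤ a k) → LiqSystem a Ms Md d (Psi a).1 (Psi a).2) :
    Measurable ({a : Fin n → ℝ | ∀ k, 0 ≤ a k}.restrict Psi) :=
  pricing_map_measurable_general Ms hMs Md hMd d psi hpsi_nonneg hpsi_mono hd_eq hpsi_lip Psi hPsi
end
end

section
/- For every solution (r¹,…,r^m,s) of the liquidation value system, one has ‖a‖₁ = 0 if and only if ‖s‖₁ = 0 and ‖rⁱ‖₁ = 0 for all i = 1,…,m. -/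
open Matrix Finset Filter

noncomputable section

/-!
In every bank the claims `r¹, …, r^m` are paid in order of priority out of the asset value
`b = a + Mˢ s + Σ M^{d,i} rⁱ` and the equity `s` receives what is left, so once `b ≥ 0` the
payments exhaust it: `s + Σ rⁱ = b`. A strictly left substochastic matrix loses mass,
`‖M x‖₁ < ‖x‖₁` for `0 ≤ x ≠ 0`, so for `a = 0` summing this identity over the banks forces
`s = rⁱ = 0`. The one delicate point is `b ≥ 0`: the senior claim `r¹ = min{d¹, b}` is not cut
off at zero, and its negative part is ruled out by the same loss of mass.
-/

theorem min_add_max_sub_zero {c t : ℝ} (hc : 0 ≤ c) :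
    min c (max t 0) + max (t - c) 0 = max t 0 := by
  grind

theorem sum_range_waterfall (c : ℝ) {d : ℕ → ℝ} (hd : ∀ i, 0 ≤ d i) (m : ℕ) :
    ∑ j ∈ range m, min (d j) (max (c - ∑ i ∈ range j, d i) 0)
      + max (c - ∑ i ∈ range m, d i) 0 = max c 0 := by
  induction m with
  | zero => simp
  | succ m ih =>
    rw [sum_range_succ, sum_range_succ, ← sub_sub, add_assoc, min_add_max_sub_zero (hd m), ih]

theorem Fin.sum_waterfall {m : ℕ} (c : ℝ) {d : Fin m → ℝ} (hd : ∀ i, 0 ≤ d i) :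
    ∑ j, min (d j) (max (c - ∑ i ∈ Iio j, d i) 0) + max (c - ∑ i, d i) 0 = max c 0 := by
  set e : ℕ → ℝ := fun p => if h : p < m then d ⟨p, h⟩ else 0
  have he : ∀ j : Fin m, e j = d j := fun j => dif_pos j.isLt
  have hIio : ∀ j : Fin m, ∑ i ∈ Iio j, d i = ∑ i ∈ range j, e i := fun j => by
    rw [← Nat.Iio_eq_range, ← Fin.map_valEmbedding_Iio, sum_map]
    exact sum_congr rfl fun i _ => (he i).symm
  have huniv : ∑ i, d i = ∑ i ∈ range m, e i := by
    rw [← Fin.sum_univ_eq_sum_range]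
    exact sum_congr rfl fun i _ => (he i).symm
  have hterm : ∀ j : Fin m, min (d j) (max (c - ∑ i ∈ Iio j, d i) 0)
      = min (e j) (max (c - ∑ i ∈ range j, e i) 0) := fun j => by rw [hIio, he]
  rw [sum_congr rfl fun j _ => hterm j, huniv,
    Fin.sum_univ_eq_sum_range (fun j => min (e j) (max (c - ∑ i ∈ range j, e i) 0))]
  exact sum_range_waterfall c (fun i => by unfold e; split_ifs <;> simp [hd]) m

theorem l1_eq_zero_iff {n : ℕ} {x : Fin n → ℝ} : l1 x = 0 ↔ x = 0 := by
  simp [l1, sum_eq_zero_iff_of_nonneg, funext_iff]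

theorem Matrix.mulVec_mono_of_nonneg {ι : Type*} [Fintype ι] {M : Matrix ι ι ℝ}
    (hM : ∀ i j, 0 ≤ M i j) {x y : ι → ℝ} (h : x ≤ y) : M *ᵥ x ≤ M *ᵥ y :=
  fun k => sum_le_sum fun l _ => mul_le_mul_of_nonneg_left (h l) (hM k l)

theorem Matrix.mulVec_nonneg_of_nonneg {ι : Type*} [Fintype ι] {M : Matrix ι ι ℝ}
    (hM : ∀ i j, 0 ≤ M i j) {x : ι → ℝ} (hx : 0 ≤ x) : 0 ≤ M *ᵥ x := by
  simpa using Matrix.mulVec_mono_of_nonneg hM hx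

theorem Matrix.sum_sub_sum_mulVec {ι : Type*} [Fintype ι] (M : Matrix ι ι ℝ) (x : ι → ℝ) :
    ∑ k, x k - ∑ k, (M *ᵥ x) k = ∑ l, (1 - ∑ k, M k l) * x l := by
  simp only [mulVec, dotProduct, sub_mul, one_mul, sum_sub_distrib, sum_mul]
  rw [sum_comm]

namespace StrictlyLeftSubstochastic

variable {n : ℕ} {M : Matrix (Fin n) (Fin n) ℝ} {x : Fin n → ℝ}

theorem sum_mulVec_le (hM : StrictlyLeftSubstochastic M) (hx : 0 ≤ x) :
    ∑ k, (M *ᵥ x) k ≤ ∑ k, x k := by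
  have hslack : 0 ≤ ∑ l, (1 - ∑ k, M k l) * x l :=
    sum_nonneg fun l _ => mul_nonneg (by linarith [hM.2 l]) (hx l)
  linarith [M.sum_sub_sum_mulVec x]

theorem eq_zero_of_sum_le_sum_mulVec (hM : StrictlyLeftSubstochastic M) (hx : 0 ≤ x)
    (h : ∑ k, x k ≤ ∑ k, (M *ᵥ x) k) : x = 0 := by
  have hslack : ∀ l, 0 ≤ (1 - ∑ k, M k l) * x l :=
    fun l => mul_nonneg (by linarith [hM.2 l]) (hx l)
  have hzero : ∑ l, (1 - ∑ k, M k l) * x l = 0 :=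
    le_antisymm (by linarith [M.sum_sub_sum_mulVec x]) (sum_nonneg fun l _ => hslack l)
  funext l
  have hl := (sum_eq_zero_iff_of_nonneg fun l _ => hslack l).mp hzero l (mem_univ l)
  exact (mul_eq_zero.mp hl).resolve_left (by linarith [hM.2 l])

theorem eq_zero_of_le_mulVec (hM : StrictlyLeftSubstochastic M) (hx : 0 ≤ x)
    (h : x ≤ M *ᵥ x) : x = 0 :=
  hM.eq_zero_of_sum_le_sum_mulVec hx (sum_le_sum fun k _ => h k)

/-- The negative part satisfies `x⁻ ≤ M x⁻` and therefore vanishes. -/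
theorem nonneg_of_min_zero_mulVec_le (hM : StrictlyLeftSubstochastic M)
    (h : ∀ k, min 0 ((M *ᵥ x) k) ≤ x k) : 0 ≤ x := by
  have hneg : -(M *ᵥ x) ≤ M *ᵥ x⁻ := by
    rw [← mulVec_neg]
    exact mulVec_mono_of_nonneg hM.1 (neg_le_negPart x)
  refine negPart_eq_zero.mp (hM.eq_zero_of_le_mulVec (negPart_nonneg x) fun k => ?_)
  rcases le_or_gt 0 (x k) with hk | hk
  · simpa [Pi.negPart_apply, negPart_eq_zero.mpr hk] using
      mulVec_nonneg_of_nonneg hM.1 (negPart_nonneg x) k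
  · have hMx : (M *ᵥ x) k ≤ x k := by
      have := h k
      rw [min_le_iff] at this
      exact this.resolve_left hk.not_ge
    simp only [Pi.negPart_apply, negPart_eq_neg.mpr hk.le]
    linarith [hneg k, show (-(M *ᵥ x)) k = -(M *ᵥ x) k from rfl]

end StrictlyLeftSubstochastic

def assets {n m : ℕ} (a : Fin n → ℝ) (Ms : Matrix (Fin n) (Fin n) ℝ)
    (Md : Fin m → Matrix (Fin n) (Fin n) ℝ) (r : Fin m → Fin n → ℝ) (s : Fin n → ℝ) :
    Fin n → ℝ :=
  a + Ms *ᵥ s + ∑ i, Md i *ᵥ r i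

namespace LiqSystem

variable {n m : ℕ} {a : Fin n → ℝ} {Ms : Matrix (Fin n) (Fin n) ℝ}
  {Md : Fin m → Matrix (Fin n) (Fin n) ℝ}
  {d : Fin m → (Fin m → Fin n → ℝ) → (Fin n → ℝ) → (Fin n → ℝ)}
  {r : Fin m → Fin n → ℝ} {s : Fin n → ℝ}

theorem equity_nonneg (h : LiqSystem a Ms Md d r s) : 0 ≤ s := fun k => by
  rw [h.2.2]
  exact le_max_right _ _

theorem recovery_nonneg_of_ne_zero (hd : ∀ i r s k, 0 ≤ d i r s k)
    (h : LiqSystem a Ms Md d r s) {j : Fin m} (hj : (j : ℕ) ≠ 0) : 0 ≤ r j := fun k => by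
  rw [h.2.1 j hj]
  exact le_min (hd _ _ _ _) (le_max_right _ _)

theorem recovery_nonneg (ha : 0 ≤ a) (hMs : ∀ i j, 0 ≤ Ms i j)
    (hMd : ∀ i, StrictlyLeftSubstochastic (Md i)) (hd : ∀ i r s k, 0 ≤ d i r s k)
    (h : LiqSystem a Ms Md d r s) (j : Fin m) : 0 ≤ r j := by
  by_cases hj : (j : ℕ) = 0
  swap
  · exact h.recovery_nonneg_of_ne_zero hd hj
  have hjunior : ∀ i ∈ univ.erase j, 0 ≤ Md i *ᵥ r i := fun i hi =>
    mulVec_nonneg_of_nonneg (hMd i).1 <| h.recovery_nonneg_of_ne_zero hd fun hi0 =>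
      (mem_erase.mp hi).1 (Fin.ext (hi0.trans hj.symm))
  refine (hMd j).nonneg_of_min_zero_mulVec_le fun k => ?_
  rw [congrFun (h.1 j hj) k]
  refine min_le_min (hd _ _ _ _) ?_
  rw [← add_sum_erase _ _ (mem_univ j)]
  simp only [Pi.add_apply, Finset.sum_apply]
  have hak : 0 ≤ a k := ha k
  have hsk : 0 ≤ (Ms *ᵥ s) k := mulVec_nonneg_of_nonneg hMs h.equity_nonneg k
  have hjuniork : 0 ≤ ∑ i ∈ univ.erase j, (Md i *ᵥ r i) k := sum_nonneg fun i hi => hjunior i hi k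
  linarith

theorem assets_nonneg (ha : 0 ≤ a) (hMs : ∀ i j, 0 ≤ Ms i j)
    (hMd : ∀ i, StrictlyLeftSubstochastic (Md i)) (hd : ∀ i r s k, 0 ≤ d i r s k)
    (h : LiqSystem a Ms Md d r s) : 0 ≤ assets a Ms Md r s :=
  add_nonneg (add_nonneg ha (mulVec_nonneg_of_nonneg hMs h.equity_nonneg)) <|
    sum_nonneg fun i _ => mulVec_nonneg_of_nonneg (hMd i).1 (h.recovery_nonneg ha hMs hMd hd i)

theorem recovery_apply (h : LiqSystem a Ms Md d r s)
    (hA : 0 ≤ assets a Ms Md r s) (j : Fin m) (k : Fin n) :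
    r j k = min (d j r s k) (max (assets a Ms Md r s k - ∑ i ∈ Iio j, d i r s k) 0) := by
  have hAk : 0 ≤ assets a Ms Md r s k := hA k
  by_cases hj : (j : ℕ) = 0
  · have hIio : Iio j = ∅ := Finset.eq_empty_of_forall_notMem fun i hi =>
      by simp [Fin.lt_def, hj] at hi
    rw [congrFun (h.1 j hj) k, hIio, sum_empty, sub_zero, max_eq_left hAk]
    rfl
  · rw [congrFun (h.2.1 j hj) k]
    simp [vmin, vpos, assets, Finset.sum_apply]

theorem equity_apply (h : LiqSystem a Ms Md d r s) (k : Fin n) :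
    s k = max (assets a Ms Md r s k - ∑ i, d i r s k) 0 := by
  rw [congrFun h.2.2 k]
  simp [vpos, assets, Finset.sum_apply]

theorem add_sum_recovery_eq_assets (ha : 0 ≤ a) (hMs : ∀ i j, 0 ≤ Ms i j)
    (hMd : ∀ i, StrictlyLeftSubstochastic (Md i)) (hd : ∀ i r s k, 0 ≤ d i r s k)
    (h : LiqSystem a Ms Md d r s) : s + ∑ j, r j = assets a Ms Md r s := by
  have hA := h.assets_nonneg ha hMs hMd hd
  funext k
  have hAk : 0 ≤ assets a Ms Md r s k := hA k
  simp only [Pi.add_apply, Finset.sum_apply, h.recovery_apply hA _ k]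
  rw [add_comm, h.equity_apply k, Fin.sum_waterfall _ fun i => hd i r s k, max_eq_left hAk]

end LiqSystem

theorem eq_zero_of_add_sum_eq_mulVec_add_sum_mulVec {n m : ℕ} {Ms : Matrix (Fin n) (Fin n) ℝ}
    {Md : Fin m → Matrix (Fin n) (Fin n) ℝ} (hMs : StrictlyLeftSubstochastic Ms)
    (hMd : ∀ i, StrictlyLeftSubstochastic (Md i)) {r : Fin m → Fin n → ℝ} {s : Fin n → ℝ}
    (hs : 0 ≤ s) (hr : ∀ i, 0 ≤ r i) (h : s + ∑ i, r i = Ms *ᵥ s + ∑ i, Md i *ᵥ r i) :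
    s = 0 ∧ ∀ i, r i = 0 := by
  have hmass := congrArg (fun v => ∑ k, v k) h
  simp only [Pi.add_apply, Finset.sum_apply, sum_add_distrib] at hmass
  rw [sum_comm, sum_comm (f := fun k i => (Md i *ᵥ r i) k)] at hmass
  have hloss : ∀ i, ∑ k, (Md i *ᵥ r i) k ≤ ∑ k, r i k := fun i => (hMd i).sum_mulVec_le (hr i)
  have hloss_total := sum_le_sum fun i (_ : i ∈ univ) => hloss i
  refine ⟨hMs.eq_zero_of_sum_le_sum_mulVec hs (by linarith), fun i => ?_⟩
  refine (hMd i).eq_zero_of_sum_le_sum_mulVec (hr i) ?_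
  have := single_le_sum (f := fun i => ∑ k, r i k - ∑ k, (Md i *ᵥ r i) k)
    (fun i _ => sub_nonneg.mpr (hloss i)) (mem_univ i)
  simp only [sum_sub_distrib] at this
  linarith [hMs.sum_mulVec_le hs]

theorem l1_a_eq_zero_iff_general {n m : ℕ}
    (a : Fin n → ℝ) (ha : ∀ k, 0 ≤ a k)
    (Ms : Matrix (Fin n) (Fin n) ℝ) (hMs : StrictlyLeftSubstochastic Ms)
    (Md : Fin m → Matrix (Fin n) (Fin n) ℝ) (hMd : ∀ i, StrictlyLeftSubstochastic (Md i))
    (d : Fin m → (Fin m → Fin n → ℝ) → (Fin n → ℝ) → (Fin n → ℝ))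
    (hd : ∀ i r s k, 0 ≤ d i r s k)
    (r : Fin m → Fin n → ℝ) (s : Fin n → ℝ)
    (hsol : LiqSystem a Ms Md d r s) :
    l1 a = 0 ↔ (l1 s = 0 ∧ ∀ i, l1 (r i) = 0) := by
  have hbalance := hsol.add_sum_recovery_eq_assets ha hMs.1 hMd hd
  simp only [l1_eq_zero_iff]
  constructor
  · rintro rfl
    refine eq_zero_of_add_sum_eq_mulVec_add_sum_mulVec hMs hMd hsol.equity_nonneg
      (hsol.recovery_nonneg ha hMs.1 hMd hd) ?_
    simpa [assets] using hbalance
  · rintro ⟨rfl, hr⟩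
    obtain rfl : r = 0 := funext hr
    simpa [assets] using hbalance.symm

/-- ‖a‖₁ = 0 iff all equities and recoveries have zero ℓ¹-norm, for any solution of the
liquidation value system. -/
theorem l1_a_eq_zero_iff {n m : ℕ} (hn : 0 < n) (hm : 0 < m)
    (a : Fin n → ℝ) (ha : ∀ k, 0 ≤ a k)
    (Ms : Matrix (Fin n) (Fin n) ℝ) (hMs : StrictlyLeftSubstochastic Ms)
    (Md : Fin m → Matrix (Fin n) (Fin n) ℝ) (hMd : ∀ i, StrictlyLeftSubstochastic (Md i))
    (d : Fin m → (Fin m → Fin n → ℝ) → (Fin n → ℝ) → (Fin n → ℝ))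
    (hd : ∀ i r s k, 0 ≤ d i r s k)
    (r : Fin m → Fin n → ℝ) (s : Fin n → ℝ)
    (hsol : LiqSystem a Ms Md d r s) :
    l1 a = 0 ↔ (l1 s = 0 ∧ ∀ i, l1 (r i) = 0) :=
  l1_a_eq_zero_iff_general a ha Ms hMs Md hMd d hd r s hsol
end
end

section
/- Norm identity and invariance for the pricing map: let Φ : ℝ^{n(m+1)} → ℝ^{n(m+1)} denote the map sending (r¹,…,r^m,s) to the tuple of right-hand sides of the liquidation value system. For all nonnegative r¹,…,r^m, s ∈ ℝ^n, one has ‖Φ(r¹,…,r^m,s)‖₁ = ‖a‖₁ + ‖Mˢ·s‖₁ + Σ_{i=1}^m ‖M^{d,i}·rⁱ‖₁ ≤ ‖a‖₁ + I^max·(‖s‖₁ + Σ_{i=1}^m ‖rⁱ‖₁). In particular, if ‖(r¹,…,r^m,s)‖₁ ≤ ‖a‖₁/(1 − I^max), then also ‖Φ(r¹,…,r^m,s)‖₁ ≤ ‖a‖₁/(1 − I^max). -/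
open Matrix Finset Filter

noncomputable section

/-- The map Φ sending (r¹,…,r^m,s) to the tuple of right-hand sides of the
liquidation value system. -/
def Phi {n m : ℕ} (a : Fin n → ℝ) (Ms : Matrix (Fin n) (Fin n) ℝ)
    (Md : Fin m → Matrix (Fin n) (Fin n) ℝ)
    (d : Fin m → (Fin m → Fin n → ℝ) → (Fin n → ℝ) → (Fin n → ℝ)) :
    ((Fin m → Fin n → ℝ) × (Fin n → ℝ)) → ((Fin m → Fin n → ℝ) × (Fin n → ℝ)) :=
  fun p =>
    (fun j =>
      if (j : ℕ) = 0 then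
        vmin (d j p.1 p.2) (a + Ms.mulVec p.2 + ∑ i, (Md i).mulVec (p.1 i))
      else
        vmin (d j p.1 p.2)
          (vpos (a + Ms.mulVec p.2 + ∑ i, (Md i).mulVec (p.1 i) -
            ∑ i ∈ Finset.Iio j, d i p.1 p.2)),
     vpos (a + Ms.mulVec p.2 + ∑ i, (Md i).mulVec (p.1 i) - ∑ i, d i p.1 p.2))

/-- ℓ¹-norm on ℝ^{n(m+1)} = (ℝ^n)^m × ℝ^n. -/
def l1P {n m : ℕ} (p : (Fin m → Fin n → ℝ) × (Fin n → ℝ)) : ℝ :=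
  (∑ i, l1 (p.1 i)) + l1 p.2

/-! Φ splits the asset value `a + Mˢ s + Σᵢ M^{d,i} rⁱ` of each firm, without loss, into a
waterfall: claim `j` receives what is left after the claims `i < j`, capped at its face value
`dʲ`, and equity receives the residual. Hence on nonnegative arguments Φ is nonnegative and its
coordinates sum to the total asset value, which is the norm identity. Each ownership matrix
scales the ℓ¹-norm of a nonnegative vector by at most its largest column sum, hence by at most
`I^max < 1`; and `ρ = ‖a‖₁ / (1 - I^max)` solves `‖a‖₁ + I^max ρ = ρ`, so the ball of that radius
is mapped into itself. -/

lemma min_max_zero_eq_sub {t : ℝ} (ht : 0 ≤ t) (y : ℝ) :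
    min t (max y 0) = max y 0 - max (y - t) 0 := by
  grind

theorem sum_min_max_sub_sum_Iio {m : ℕ} (t : Fin m → ℝ) (ht : ∀ i, 0 ≤ t i) (c : ℝ) :
    ∑ j, min (t j) (max (c - ∑ i < j, t i) 0) = max c 0 - max (c - ∑ i, t i) 0 := by
  induction m with
  | zero => simp
  | succ m ih =>
    have hlast : ∑ i < Fin.last m, t i = ∑ i : Fin m, t i.castSucc := by
      rw [Fin.Iio_last_eq_map, Finset.sum_map]; rfl
    rw [Fin.sum_univ_castSucc, hlast]
    simp only [Fin.sum_Iio_castSucc]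
    rw [ih _ fun i => ht _, min_max_zero_eq_sub (ht _), Fin.sum_univ_castSucc t, ← sub_sub]
    ring

section Vectors

variable {n : ℕ}

lemma l1_eq_sum_of_nonneg {v : Fin n → ℝ} (hv : ∀ k, 0 ≤ v k) : l1 v = ∑ k, v k :=
  Finset.sum_congr rfl fun k _ => abs_of_nonneg (hv k)

lemma mulVec_nonneg {ι κ : Type*} [Fintype κ] {M : Matrix ι κ ℝ} (hM : ∀ i j, 0 ≤ M i j)
    {v : κ → ℝ} (hv : ∀ k, 0 ≤ v k) (i : ι) : 0 ≤ (M *ᵥ v) i :=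
  Finset.sum_nonneg fun j _ => mul_nonneg (hM i j) (hv j)

lemma l1_mulVec_le_of_colSum_le {M : Matrix (Fin n) (Fin n) ℝ} (hM : ∀ i j, 0 ≤ M i j)
    {v : Fin n → ℝ} (hv : ∀ k, 0 ≤ v k) {C : ℝ} (hC : ∀ j, ∑ i, M i j ≤ C) :
    l1 (M *ᵥ v) ≤ C * l1 v := by
  rw [l1_eq_sum_of_nonneg (mulVec_nonneg hM hv), l1_eq_sum_of_nonneg hv, Finset.mul_sum]
  calc ∑ i, (M *ᵥ v) i = ∑ j, (∑ i, M i j) * v j := by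
        simp only [mulVec, dotProduct, Finset.sum_mul]
        exact Finset.sum_comm
    _ ≤ ∑ j, C * v j := by gcongr with j; exact hv j; exact hC j

end Vectors

lemma Real.iSup_lt_of_forall_lt {ι : Type*} [Finite ι] {f : ι → ℝ} {c : ℝ} (hc : 0 < c)
    (h : ∀ i, f i < c) : ⨆ i, f i < c := by
  rcases isEmpty_or_nonempty ι with hι | hι
  · rwa [Real.iSup_of_isEmpty]
  · obtain ⟨i, hi⟩ := Finite.exists_max f
    exact (ciSup_le hi).trans_lt (h i)

section Imax

variable {n m : ℕ} {Ms : Matrix (Fin n) (Fin n) ℝ} {Md : Fin m → Matrix (Fin n) (Fin n) ℝ}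

lemma colSum_le_Imax_left (j : Fin n) : ∑ i, Ms i j ≤ Imax Ms Md :=
  (le_ciSup (f := fun j => ∑ i, Ms i j) (Set.finite_range _).bddAbove j).trans (le_max_left _ _)

lemma colSum_le_Imax_right (l : Fin m) (j : Fin n) : ∑ i, Md l i j ≤ Imax Ms Md :=
  ((le_ciSup (f := fun j => ∑ i, Md l i j) (Set.finite_range _).bddAbove j).trans
    (le_ciSup (f := fun l => ⨆ j, ∑ i, Md l i j) (Set.finite_range _).bddAbove l)).trans
    (le_max_right _ _)

lemma Imax_nonneg (hMs : ∀ i j, 0 ≤ Ms i j) : 0 ≤ Imax Ms Md :=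
  le_max_of_le_left (Real.iSup_nonneg fun _ => Finset.sum_nonneg fun i _ => hMs i _)

lemma Imax_lt_one (hMs : StrictlyLeftSubstochastic Ms)
    (hMd : ∀ l, StrictlyLeftSubstochastic (Md l)) : Imax Ms Md < 1 :=
  max_lt (Real.iSup_lt_of_forall_lt one_pos hMs.2)
    (Real.iSup_lt_of_forall_lt one_pos fun l => Real.iSup_lt_of_forall_lt one_pos (hMd l).2)

end Imax

lemma add_mul_le_div_one_sub {A I x : ℝ} (hI₀ : 0 ≤ I) (hI₁ : I < 1) (hx : x ≤ A / (1 - I)) :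
    A + I * x ≤ A / (1 - I) :=
  calc A + I * x ≤ A + I * (A / (1 - I)) := by gcongr
    _ = A / (1 - I) := by field_simp [(sub_pos.2 hI₁).ne']; ring

def assetValue {n m : ℕ} (a : Fin n → ℝ) (Ms : Matrix (Fin n) (Fin n) ℝ)
    (Md : Fin m → Matrix (Fin n) (Fin n) ℝ) (r : Fin m → Fin n → ℝ) (s : Fin n → ℝ) :
    Fin n → ℝ :=
  a + Ms *ᵥ s + ∑ i, Md i *ᵥ r i

section Phi

variable {n m : ℕ} {a : Fin n → ℝ} {Ms : Matrix (Fin n) (Fin n) ℝ}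
  {Md : Fin m → Matrix (Fin n) (Fin n) ℝ}
  {d : Fin m → (Fin m → Fin n → ℝ) → (Fin n → ℝ) → (Fin n → ℝ)}
  {r : Fin m → Fin n → ℝ} {s : Fin n → ℝ}

lemma sum_assetValue (ha : ∀ k, 0 ≤ a k) (hMs : ∀ i j, 0 ≤ Ms i j)
    (hMd : ∀ l i j, 0 ≤ Md l i j) (hr : ∀ i k, 0 ≤ r i k) (hs : ∀ k, 0 ≤ s k) :
    ∑ k, assetValue a Ms Md r s k = l1 a + l1 (Ms *ᵥ s) + ∑ i, l1 (Md i *ᵥ r i) := by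
  simp only [l1_eq_sum_of_nonneg ha, l1_eq_sum_of_nonneg (mulVec_nonneg hMs hs),
    l1_eq_sum_of_nonneg (mulVec_nonneg (hMd _) (hr _)), assetValue, Pi.add_apply,
    Finset.sum_apply, Finset.sum_add_distrib]
  rw [Finset.sum_comm]

lemma assetValue_nonneg (ha : ∀ k, 0 ≤ a k) (hMs : ∀ i j, 0 ≤ Ms i j)
    (hMd : ∀ l i j, 0 ≤ Md l i j) (hr : ∀ i k, 0 ≤ r i k) (hs : ∀ k, 0 ≤ s k) (k : Fin n) :
    0 ≤ assetValue a Ms Md r s k := by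
  simp only [assetValue, Pi.add_apply, Finset.sum_apply]
  have := mulVec_nonneg hMs hs k
  have := Finset.sum_nonneg fun i (_ : i ∈ Finset.univ) => mulVec_nonneg (hMd i) (hr i) k
  linarith [ha k]

lemma phi_fst_apply {k : Fin n} (hA : 0 ≤ assetValue a Ms Md r s k) (j : Fin m) :
    (Phi a Ms Md d (r, s)).1 j k =
      min (d j r s k) (max (assetValue a Ms Md r s k - ∑ i < j, d i r s k) 0) := by
  by_cases hj : (j : ℕ) = 0
  · have hIio : ∑ i < j, d i r s k = 0 :=
      Finset.sum_eq_zero fun i hi => absurd (Finset.mem_Iio.1 hi) (by omega)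
    rw [hIio, sub_zero, max_eq_left hA]
    simp only [Phi, assetValue, if_pos hj, vmin]
  · simp only [Phi, assetValue, if_neg hj, vmin, vpos, Pi.sub_apply, Finset.sum_apply]

lemma phi_snd_apply (k : Fin n) :
    (Phi a Ms Md d (r, s)).2 k = max (assetValue a Ms Md r s k - ∑ i, d i r s k) 0 := by
  simp only [Phi, assetValue, vpos, Pi.sub_apply, Finset.sum_apply]

lemma sum_phi_fst_add_phi_snd (hd : ∀ i k, 0 ≤ d i r s k) {k : Fin n}
    (hA : 0 ≤ assetValue a Ms Md r s k) :
    ∑ j, (Phi a Ms Md d (r, s)).1 j k + (Phi a Ms Md d (r, s)).2 k = assetValue a Ms Md r s k := by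
  simp only [phi_fst_apply hA, phi_snd_apply,
    sum_min_max_sub_sum_Iio (fun i => d i r s k) (fun i => hd i k), max_eq_left hA]
  ring

lemma l1P_phi (hd : ∀ i k, 0 ≤ d i r s k) (hA : ∀ k, 0 ≤ assetValue a Ms Md r s k) :
    l1P (Phi a Ms Md d (r, s)) = ∑ k, assetValue a Ms Md r s k := by
  have hfst : ∀ j k, 0 ≤ (Phi a Ms Md d (r, s)).1 j k := fun j k => by
    rw [phi_fst_apply (hA k)]; exact le_min (hd j k) (le_max_right _ _)
  have hsnd : ∀ k, 0 ≤ (Phi a Ms Md d (r, s)).2 k := fun k => by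
    rw [phi_snd_apply]; exact le_max_right _ _
  simp only [l1P, l1_eq_sum_of_nonneg (hfst _), l1_eq_sum_of_nonneg hsnd]
  rw [Finset.sum_comm, ← Finset.sum_add_distrib]
  exact Finset.sum_congr rfl fun k _ => sum_phi_fst_add_phi_snd hd (hA k)

end Phi

theorem phi_norm_identity_general {n m : ℕ}
    (a : Fin n → ℝ) (ha : ∀ k, 0 ≤ a k)
    (Ms : Matrix (Fin n) (Fin n) ℝ) (hMs : StrictlyLeftSubstochastic Ms)
    (Md : Fin m → Matrix (Fin n) (Fin n) ℝ) (hMd : ∀ i, StrictlyLeftSubstochastic (Md i))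
    (d : Fin m → (Fin m → Fin n → ℝ) → (Fin n → ℝ) → (Fin n → ℝ))
    (hd : ∀ i r s k, 0 ≤ d i r s k)
    (r : Fin m → Fin n → ℝ) (s : Fin n → ℝ)
    (hr : ∀ i k, 0 ≤ r i k) (hs : ∀ k, 0 ≤ s k) :
    l1P (Phi a Ms Md d (r, s)) =
      l1 a + l1 (Ms.mulVec s) + ∑ i, l1 ((Md i).mulVec (r i)) ∧
    l1 a + l1 (Ms.mulVec s) + ∑ i, l1 ((Md i).mulVec (r i)) ≤
      l1 a + Imax Ms Md * (l1 s + ∑ i, l1 (r i)) ∧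
    (l1P (r, s) ≤ l1 a / (1 - Imax Ms Md) →
      l1P (Phi a Ms Md d (r, s)) ≤ l1 a / (1 - Imax Ms Md)) := by
  have hMd₀ : ∀ l i j, 0 ≤ Md l i j := fun l => (hMd l).1
  have hnorm : l1P (Phi a Ms Md d (r, s)) =
      l1 a + l1 (Ms *ᵥ s) + ∑ i, l1 (Md i *ᵥ r i) := by
    rw [l1P_phi (hd · r s) (assetValue_nonneg ha hMs.1 hMd₀ hr hs),
      sum_assetValue ha hMs.1 hMd₀ hr hs]
  have hbound : l1 a + l1 (Ms *ᵥ s) + ∑ i, l1 (Md i *ᵥ r i) ≤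
      l1 a + Imax Ms Md * (l1 s + ∑ i, l1 (r i)) := by
    rw [mul_add, Finset.mul_sum, add_assoc]
    gcongr with i
    · exact l1_mulVec_le_of_colSum_le hMs.1 hs colSum_le_Imax_left
    · exact l1_mulVec_le_of_colSum_le (hMd₀ i) (hr i) (colSum_le_Imax_right i)
  refine ⟨hnorm, hbound, fun hball => ?_⟩
  rw [hnorm]
  refine hbound.trans (add_mul_le_div_one_sub (Imax_nonneg hMs.1) (Imax_lt_one hMs hMd) ?_)
  rwa [l1P, add_comm] at hball

/-- Norm identity and invariance for the pricing map Φ on nonnegative tuples: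
‖Φ(r,s)‖₁ = ‖a‖₁ + ‖Mˢ·s‖₁ + Σᵢ ‖M^{d,i}·rⁱ‖₁ ≤ ‖a‖₁ + I^max·(‖s‖₁ + Σᵢ ‖rⁱ‖₁);
in particular Φ maps the ball of radius ‖a‖₁/(1 − I^max) into itself. -/
theorem phi_norm_identity {n m : ℕ} (hn : 0 < n) (hm : 0 < m)
    (a : Fin n → ℝ) (ha : ∀ k, 0 ≤ a k)
    (Ms : Matrix (Fin n) (Fin n) ℝ) (hMs : StrictlyLeftSubstochastic Ms)
    (Md : Fin m → Matrix (Fin n) (Fin n) ℝ) (hMd : ∀ i, StrictlyLeftSubstochastic (Md i))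
    (d : Fin m → (Fin m → Fin n → ℝ) → (Fin n → ℝ) → (Fin n → ℝ))
    (hd : ∀ i r s k, 0 ≤ d i r s k)
    (r : Fin m → Fin n → ℝ) (s : Fin n → ℝ)
    (hr : ∀ i k, 0 ≤ r i k) (hs : ∀ k, 0 ≤ s k) :
    l1P (Phi a Ms Md d (r, s)) =
      l1 a + l1 (Ms.mulVec s) + ∑ i, l1 ((Md i).mulVec (r i)) ∧
    l1 a + l1 (Ms.mulVec s) + ∑ i, l1 ((Md i).mulVec (r i)) ≤
      l1 a + Imax Ms Md * (l1 s + ∑ i, l1 (r i)) ∧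
    (l1P (r, s) ≤ l1 a / (1 - Imax Ms Md) →
      l1P (Phi a Ms Md d (r, s)) ≤ l1 a / (1 - Imax Ms Md)) :=
  phi_norm_identity_general a ha Ms hMs Md hMd d hd r s hr hs
end
end
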